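/- Assume the Bregman PDMM setup (see context) at a fixed iteration t, with iterates (x^t, y^t, ν^t) and (x^{t+1}, y^{t+1}, ν^{t+1}) satisfying the mirror-averaging optimality conditions at steps t and t+1, the primal optimality condition at step t+1, and the dual update, and with parameters satisfying 0 < γ < μσ and τ ≤ ρ(μσ − γ). Let x* ∈ 𝒳 be a consensus point (x*_i = x* for all i). Then Σ_{i=1}^m f_i(x_i^{t+1}) − Σ_{i=1}^m f_i(x*) ≤ (1/(2τ))(‖ν^t‖² − ‖ν^{t+1}‖²) + ρ Σ_{i=1}^m (B_φ(x*, y_i^t) − B_φ(x*, y_i^{t+1})) + Σ_{i=1}^m δ_i (B_{φ_i}(x*, x_i^t) − B_{φ_i}(x*, x_i^{t+1})), where ‖ν‖² = Σ_i ‖ν_i‖_2². -/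

import Mathlib

/-!
Each agent's subgradient inequality at `x*`, rewritten with the three-point identity for Bregman
divergences, bounds `f_i(x_i^{t+1}) - f_i(x*)` by a dual term plus telescoping Bregman terms.
Summed over the agents, the dual term equals `(‖ν^t‖² - ‖ν^{t+1}‖²) / (2τ)` plus the consensus
residual `τ/2 · Σ ‖x_i - (P x)_i‖²`. Mirror averaging at step `t + 1` trades `B_φ(x*, x^{t+1})` for
`B_φ(x*, y^{t+1})` at the price of `Σ P_ij B_φ(y_i^{t+1}, x_j^{t+1})`, and this price dominates the
residual: strong convexity gives `B_φ(y_i, x_j) ≥ μσ/2 ‖y_i - x_j‖²`, and for a symmetric, doubly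
stochastic, positive semidefinite `P` one has `Σ ‖x_i - (P x)_i‖² ≤ Σ P_ij ‖w_i - x_j‖²` for every
family `w`, because `P - P² ⪰ 0`.
-/

open scoped RealInnerProductSpace BigOperators

/-- The Bregman divergence `B_φ(u,v) = φ(u) − φ(v) − ⟨∇φ(v), u − v⟩`. -/
noncomputable def breg {n : ℕ} (φ : EuclideanSpace ℝ (Fin n) → ℝ)
    (u v : EuclideanSpace ℝ (Fin n)) : ℝ :=
  φ u - φ v - ⟪gradient φ v, u - v⟫

/-- The ℓ_p norm on ℝ^n: `‖w‖_p = (Σ_k |w_k|^p)^(1/p)`. -/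
noncomputable def lpnorm {n : ℕ} (p : ℝ) (w : EuclideanSpace ℝ (Fin n)) : ℝ :=
  (∑ k, |w k| ^ p) ^ (1 / p)

open Finset

theorem ConvexOn.add_fderiv_sub_le {E : Type*} [NormedAddCommGroup E] [NormedSpace ℝ E]
    {s : Set E} {ψ : E → ℝ} {ψ' : E →L[ℝ] ℝ} {u v : E} (hψ : ConvexOn ℝ s ψ)
    (hu : u ∈ s) (hv : v ∈ s) (hd : HasFDerivAt ψ ψ' v) :
    ψ v + ψ' (u - v) ≤ ψ u := by
  let L : ℝ →ᵃ[ℝ] E := AffineMap.lineMap v u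
  have hderiv : HasDerivAt (ψ ∘ L) (ψ' (u - v)) 0 :=
    hd.comp_hasDerivAt_of_eq 0 AffineMap.hasDerivAt_lineMap (by simp [L])
  have hslope : slope (ψ ∘ L) 0 1 = ψ u - ψ v := by simp [slope, L]
  have := (hψ.comp_affineMap L).le_slope_of_hasDerivAt (x := 0) (y := 1)
    (by simpa [L]) (by simpa [L]) zero_lt_one hderiv
  linarith

theorem Real.sum_rpow_le_rpow_sum {ι : Type*} (s : Finset ι) {b : ι → ℝ} (hb : ∀ i, 0 ≤ b i)
    {e : ℝ} (he : 1 ≤ e) : ∑ i ∈ s, b i ^ e ≤ (∑ i ∈ s, b i) ^ e := by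
  induction s using Finset.cons_induction with
  | empty => simp [Real.zero_rpow (by linarith : e ≠ 0)]
  | cons a s ha ih =>
    rw [sum_cons, sum_cons]
    exact (add_le_add_right ih _).trans
      (Real.add_rpow_le_rpow_add (hb a) (sum_nonneg fun i _ => hb i) he)

theorem Real.card_rpow_mul_sum_rpow_le_rpow_sum {ι : Type*} (s : Finset ι) {b : ι → ℝ}
    (hb : ∀ i, 0 ≤ b i) {e : ℝ} (he0 : 0 < e) (he1 : e ≤ 1) :
    (#s : ℝ) ^ (e - 1) * ∑ i ∈ s, b i ^ e ≤ (∑ i ∈ s, b i) ^ e := by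
  rcases s.eq_empty_or_nonempty with rfl | hs
  · simp only [sum_empty, mul_zero]
    positivity
  have hcard : (0 : ℝ) < #s := by exact_mod_cast hs.card_pos
  have hS : 0 ≤ ∑ i ∈ s, b i ^ e := sum_nonneg fun i _ => Real.rpow_nonneg (hb i) e
  have hmean : (∑ i ∈ s, b i ^ e) ^ e⁻¹ ≤ (#s : ℝ) ^ (e⁻¹ - 1) * ∑ i ∈ s, b i := by
    simpa [← Real.rpow_mul (hb _), mul_inv_cancel₀ he0.ne'] using
      Real.rpow_sum_le_const_mul_sum_rpow_of_nonneg s (f := fun i => b i ^ e)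
        ((one_le_inv₀ he0).2 he1) (fun i _ => Real.rpow_nonneg (hb i) e)
  calc (#s : ℝ) ^ (e - 1) * ∑ i ∈ s, b i ^ e
      = (#s : ℝ) ^ (e - 1) * ((∑ i ∈ s, b i ^ e) ^ e⁻¹) ^ e := by
        rw [← Real.rpow_mul hS, inv_mul_cancel₀ he0.ne', Real.rpow_one]
    _ ≤ (#s : ℝ) ^ (e - 1) * ((#s : ℝ) ^ (e⁻¹ - 1) * ∑ i ∈ s, b i) ^ e := by gcongr
    _ = (∑ i ∈ s, b i) ^ e := by
        rw [Real.mul_rpow (by positivity) (sum_nonneg fun i _ => hb i), ← Real.rpow_mul hcard.le,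
          ← mul_assoc, ← Real.rpow_add hcard, sub_mul, inv_mul_cancel₀ he0.ne', one_mul,
          sub_add_sub_cancel', sub_self, Real.rpow_zero, one_mul]

section LpNorm
variable {n : ℕ} {p : ℝ}

theorem lpnorm_sq (hp : 0 < p) (w : EuclideanSpace ℝ (Fin n)) :
    lpnorm p w ^ 2 = (∑ k, |w k| ^ p) ^ (2 / p) := by
  rw [lpnorm, ← Real.rpow_natCast, ← Real.rpow_mul (sum_nonneg fun k _ => by positivity)]
  congr 1
  push_cast
  field_simp

theorem EuclideanSpace.norm_sq_eq_sum_rpow (hp : 0 < p) (w : EuclideanSpace ℝ (Fin n)) :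
    ‖w‖ ^ 2 = ∑ k, (|w k| ^ p) ^ (2 / p) := by
  rw [EuclideanSpace.norm_sq_eq]
  refine sum_congr rfl fun k _ => ?_
  rw [← Real.rpow_mul (abs_nonneg _), mul_div_cancel₀ _ hp.ne', Real.rpow_two, Real.norm_eq_abs]

theorem norm_sq_le_lpnorm_sq (hp : 0 < p) (hp2 : p ≤ 2) (w : EuclideanSpace ℝ (Fin n)) :
    ‖w‖ ^ 2 ≤ lpnorm p w ^ 2 := by
  rw [EuclideanSpace.norm_sq_eq_sum_rpow hp, lpnorm_sq hp]
  exact Real.sum_rpow_le_rpow_sum _ (fun k => by positivity) ((one_le_div hp).2 hp2)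

theorem rpow_mul_norm_sq_le_lpnorm_sq (hp : 2 ≤ p) (w : EuclideanSpace ℝ (Fin n)) :
    (n : ℝ) ^ (2 / p - 1) * ‖w‖ ^ 2 ≤ lpnorm p w ^ 2 := by
  have hp0 : 0 < p := by linarith
  have := Real.card_rpow_mul_sum_rpow_le_rpow_sum univ
    (fun k => Real.rpow_nonneg (abs_nonneg (w k)) p) (by positivity : 0 < 2 / p)
    ((div_le_one hp0).2 hp)
  rwa [card_univ, Fintype.card_fin, ← EuclideanSpace.norm_sq_eq_sum_rpow hp0,
    ← lpnorm_sq hp0] at this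

theorem min_mul_norm_sq_le_lpnorm_sq (hp : 0 < p) (w : EuclideanSpace ℝ (Fin n)) :
    min 1 ((n : ℝ) ^ (2 / p - 1)) * ‖w‖ ^ 2 ≤ lpnorm p w ^ 2 := by
  rcases le_total p 2 with hp2 | hp2
  · calc min 1 ((n : ℝ) ^ (2 / p - 1)) * ‖w‖ ^ 2 ≤ 1 * ‖w‖ ^ 2 := by gcongr; exact min_le_left _ _
      _ ≤ lpnorm p w ^ 2 := by rw [one_mul]; exact norm_sq_le_lpnorm_sq hp hp2 w
  · calc min 1 ((n : ℝ) ^ (2 / p - 1)) * ‖w‖ ^ 2 ≤ (n : ℝ) ^ (2 / p - 1) * ‖w‖ ^ 2 := by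
          gcongr; exact min_le_right _ _
      _ ≤ lpnorm p w ^ 2 := rpow_mul_norm_sq_le_lpnorm_sq hp2 w

theorem mul_min_mul_norm_sq_le_of_mul_lpnorm_sq_le {μ c : ℝ} (hμ : 0 ≤ μ) (hp : 0 < p)
    {w : EuclideanSpace ℝ (Fin n)} (h : μ / 2 * lpnorm p w ^ 2 ≤ c) :
    μ * min 1 ((n : ℝ) ^ (2 / p - 1)) / 2 * ‖w‖ ^ 2 ≤ c :=
  calc μ * min 1 ((n : ℝ) ^ (2 / p - 1)) / 2 * ‖w‖ ^ 2
      = μ / 2 * (min 1 ((n : ℝ) ^ (2 / p - 1)) * ‖w‖ ^ 2) := by ring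
    _ ≤ μ / 2 * lpnorm p w ^ 2 := by gcongr; exact min_mul_norm_sq_le_lpnorm_sq hp w
    _ ≤ c := h

end LpNorm

section Mixing
variable {ι E : Type*} [Fintype ι] [NormedAddCommGroup E] [InnerProductSpace ℝ E]
  {P : Matrix ι ι ℝ}

theorem Matrix.IsSymm.sum_inner_sum_smul_comm (hP : P.IsSymm) (a b : ι → E) :
    ∑ i, ⟪∑ j, P i j • a j, b i⟫ = ∑ i, ⟪a i, ∑ j, P i j • b j⟫ := by
  simp_rw [sum_inner, inner_sum, real_inner_smul_left, real_inner_smul_right]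
  rw [sum_comm]
  exact sum_congr rfl fun i _ => sum_congr rfl fun j _ => by rw [hP.apply i j]

theorem Matrix.PosSemidef.sum_inner_sum_smul_nonneg (hP : P.PosSemidef) (a : ι → E) :
    0 ≤ ∑ i, ⟪a i, ∑ j, P i j • a j⟫ := by
  obtain ⟨m, v, rfl⟩ := Matrix.posSemidef_iff_eq_sum_vecMulVec.mp hP
  have : ∑ i, ⟪a i, ∑ j, (∑ k, Matrix.vecMulVec (v k) (star (v k))) i j • a j⟫
      = ∑ k, ‖∑ i, v k i • a i‖ ^ 2 := by
    simp only [← real_inner_self_eq_norm_sq, sum_inner, inner_sum, real_inner_smul_left,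
      real_inner_smul_right, Matrix.sum_apply, Matrix.vecMulVec_apply, star_trivial, sum_mul]
    rw [sum_comm_cycle]
    refine sum_congr rfl fun k _ => sum_congr rfl fun i _ => sum_congr rfl fun j _ => ?_
    rw [real_inner_comm]
    ring
  rw [this]
  positivity

theorem sum_mul_norm_sub_sq {w : ι → ℝ} (hw : ∑ j, w j = 1) (a : ι → E) (x : E) :
    ∑ j, w j * ‖x - a j‖ ^ 2
      = ‖x - ∑ j, w j • a j‖ ^ 2 + (∑ j, w j * ‖a j‖ ^ 2 - ‖∑ j, w j • a j‖ ^ 2) := by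
  simp only [norm_sub_sq_real, inner_sum, real_inner_smul_right, mul_add, mul_sub, sum_add_distrib,
    sum_sub_distrib, ← sum_mul, hw, mul_left_comm _ (2 : ℝ), ← mul_sum]
  ring

variable [DecidableEq ι]

theorem sum_sum_smul_of_mem_doublyStochastic (hP : P ∈ doublyStochastic ℝ ι) (a : ι → E) :
    ∑ i, ∑ j, P i j • a j = ∑ j, a j := by
  rw [sum_comm]
  simp_rw [← sum_smul, sum_col_of_mem_doublyStochastic hP, one_smul]

theorem sum_inner_sum_smul_le_sum_norm_sq (hP : P ∈ doublyStochastic ℝ ι) (a : ι → E) :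
    ∑ i, ⟪a i, ∑ j, P i j • a j⟫ ≤ ∑ i, ‖a i‖ ^ 2 := by
  have hpair : ∀ i j, P i j * ⟪a i, a j⟫ ≤ P i j * ‖a i‖ ^ 2 / 2 + P i j * ‖a j‖ ^ 2 / 2 := by
    intro i j
    have := norm_sub_sq_real (a i) (a j)
    nlinarith [nonneg_of_mem_doublyStochastic hP (i := i) (j := j), sq_nonneg ‖a i - a j‖]
  calc ∑ i, ⟪a i, ∑ j, P i j • a j⟫ = ∑ i, ∑ j, P i j * ⟪a i, a j⟫ := by
        simp_rw [inner_sum, real_inner_smul_right]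
    _ ≤ ∑ i, ∑ j, (P i j * ‖a i‖ ^ 2 / 2 + P i j * ‖a j‖ ^ 2 / 2) := by
        gcongr with i _ j _
        exact hpair i j
    _ = ∑ i, ‖a i‖ ^ 2 := by
        simp_rw [sum_add_distrib, ← sum_div, ← sum_mul, sum_row_of_mem_doublyStochastic hP]
        rw [sum_comm]
        simp_rw [← sum_mul, sum_col_of_mem_doublyStochastic hP, one_mul]
        ring

-- `P - P² ⪰ 0`: test `P ⪰ 0` on `a - P a` and `I - P ⪰ 0` on `P a`.
theorem sum_norm_sum_smul_sq_le_sum_inner (hP : P ∈ doublyStochastic ℝ ι) (hPs : P.IsSymm)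
    (hPp : P.PosSemidef) (a : ι → E) :
    ∑ i, ‖∑ j, P i j • a j‖ ^ 2 ≤ ∑ i, ⟪a i, ∑ j, P i j • a j⟫ := by
  let c i := ∑ j, P i j • a j
  have hmix : ∀ i, ∑ j, P i j • (a j - c j) = c i - ∑ j, P i j • c j := fun i => by
    simp only [smul_sub, sum_sub_distrib, c]
  have hcomm : ∑ i, ⟪c i, c i⟫ = ∑ i, ⟪a i, ∑ j, P i j • c j⟫ :=
    hPs.sum_inner_sum_smul_comm a c
  have hpos := hPp.sum_inner_sum_smul_nonneg (fun i => a i - c i)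
  simp only [hmix, inner_sub_left, inner_sub_right, sum_sub_distrib] at hpos
  have hcc := sum_inner_sum_smul_le_sum_norm_sq hP c
  change ∑ i, ‖c i‖ ^ 2 ≤ ∑ i, ⟪a i, c i⟫
  simp only [real_inner_self_eq_norm_sq] at hpos hcomm
  linarith

theorem sum_norm_sub_sum_smul_sq_le (hP : P ∈ doublyStochastic ℝ ι) (hPs : P.IsSymm)
    (hPp : P.PosSemidef) (a w : ι → E) :
    ∑ i, ‖a i - ∑ j, P i j • a j‖ ^ 2 ≤ ∑ i, ∑ j, P i j * ‖w i - a j‖ ^ 2 := by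
  let c i := ∑ j, P i j • a j
  have hcol : ∑ i, ∑ j, P i j * ‖a j‖ ^ 2 = ∑ j, ‖a j‖ ^ 2 :=
    sum_sum_smul_of_mem_doublyStochastic hP fun j => ‖a j‖ ^ 2
  have hT : ∑ i, ‖c i‖ ^ 2 ≤ ∑ i, ⟪a i, c i⟫ := sum_norm_sum_smul_sq_le_sum_inner hP hPs hPp a
  calc ∑ i, ‖a i - c i‖ ^ 2 = ∑ i, ‖a i‖ ^ 2 - 2 * ∑ i, ⟪a i, c i⟫ + ∑ i, ‖c i‖ ^ 2 := by
        simp only [norm_sub_sq_real, sum_add_distrib, sum_sub_distrib, ← mul_sum]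
    _ ≤ ∑ i, (∑ j, P i j * ‖a j‖ ^ 2 - ‖c i‖ ^ 2) := by
        rw [sum_sub_distrib, hcol]
        linarith
    _ ≤ ∑ i, (‖w i - c i‖ ^ 2 + (∑ j, P i j * ‖a j‖ ^ 2 - ‖c i‖ ^ 2)) := by
        gcongr
        exact le_add_of_nonneg_left (sq_nonneg _)
    _ = ∑ i, ∑ j, P i j * ‖w i - a j‖ ^ 2 := by
        simp only [sum_mul_norm_sub_sq (sum_row_of_mem_doublyStochastic hP _) a, c]

theorem mul_sum_norm_sub_sum_smul_sq_le (hP : P ∈ doublyStochastic ℝ ι) (hPs : P.IsSymm)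
    (hPp : P.PosSemidef) {κ : ℝ} (hκ : 0 ≤ κ) (a w : ι → E) {D : ι → ι → ℝ}
    (hD : ∀ i j, κ * ‖w i - a j‖ ^ 2 ≤ D i j) :
    κ * ∑ i, ‖a i - ∑ j, P i j • a j‖ ^ 2 ≤ ∑ i, ∑ j, P i j * D i j :=
  calc κ * ∑ i, ‖a i - ∑ j, P i j • a j‖ ^ 2
      ≤ κ * ∑ i, ∑ j, P i j * ‖w i - a j‖ ^ 2 :=
        mul_le_mul_of_nonneg_left (sum_norm_sub_sum_smul_sq_le hP hPs hPp a w) hκ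
    _ = ∑ i, ∑ j, P i j * (κ * ‖w i - a j‖ ^ 2) := by
        simp only [mul_sum, mul_left_comm κ]
    _ ≤ ∑ i, ∑ j, P i j * D i j := by
        gcongr with i _ j _
        · exact nonneg_of_mem_doublyStochastic hP
        · exact hD i j

theorem neg_inner_eq_of_eq_add_smul {ν ν' r : E} {τ : ℝ} (hτ : τ ≠ 0) (h : ν' = ν + τ • r) :
    -⟪ν, r⟫ = 1 / (2 * τ) * (‖ν‖ ^ 2 - ‖ν'‖ ^ 2) + τ / 2 * ‖r‖ ^ 2 := by
  rw [h, norm_add_sq_real, real_inner_smul_right, norm_smul, Real.norm_eq_abs, mul_pow, sq_abs]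
  field_simp
  ring

theorem sum_inner_sum_smul_sub_eq (hP : P ∈ doublyStochastic ℝ ι) (hPs : P.IsSymm)
    {τ : ℝ} (hτ : τ ≠ 0) {x ν ν' : ι → E}
    (hν' : ∀ i, ν' i = ν i + τ • (x i - ∑ j, P i j • x j)) (z : E) :
    ∑ i, ⟪∑ j, P i j • ν j - ν i, x i - z⟫
      = 1 / (2 * τ) * (∑ i, ‖ν i‖ ^ 2 - ∑ i, ‖ν' i‖ ^ 2)
        + τ / 2 * ∑ i, ‖x i - ∑ j, P i j • x j‖ ^ 2 := by
  have hz : ∑ i, ⟪∑ j, P i j • ν j - ν i, z⟫ = 0 := by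
    rw [← sum_inner, sum_sub_distrib, sum_sum_smul_of_mem_doublyStochastic hP, sub_self,
      inner_zero_left]
  have hcomm := hPs.sum_inner_sum_smul_comm ν x
  calc ∑ i, ⟪∑ j, P i j • ν j - ν i, x i - z⟫
      = ∑ i, -⟪ν i, x i - ∑ j, P i j • x j⟫ := by
        simp only [inner_sub_right, sum_sub_distrib, hz, sub_zero]
        simp only [inner_sub_left, sum_sub_distrib, hcomm, sum_neg_distrib]
        ring
    _ = _ := by
        simp only [neg_inner_eq_of_eq_add_smul hτ (hν' _), sum_add_distrib, ← mul_sum,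
          sum_sub_distrib]

end Mixing

section Bregman
variable {n : ℕ}

theorem breg_nonneg {ψ : EuclideanSpace ℝ (Fin n) → ℝ} {u v : EuclideanSpace ℝ (Fin n)}
    (hd : DifferentiableAt ℝ ψ v) (hψ : ConvexOn ℝ Set.univ ψ) : 0 ≤ breg ψ u v := by
  have := hψ.add_fderiv_sub_le (Set.mem_univ u) (Set.mem_univ v) hd.hasGradientAt.hasFDerivAt
  rw [InnerProductSpace.toDual_apply_apply] at this
  rw [breg]
  linarith

theorem breg_three_point (φ : EuclideanSpace ℝ (Fin n) → ℝ) (u a b : EuclideanSpace ℝ (Fin n)) :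
    ⟪gradient φ a - gradient φ b, u - a⟫ = breg φ u b - breg φ u a - breg φ a b := by
  simp only [breg, inner_sub_left, inner_sub_right]
  ring

theorem pdmm_primal_sub_le {f φ ψ : EuclideanSpace ℝ (Fin n) → ℝ} {ρ δ : ℝ}
    {ν ν' g x x' y z : EuclideanSpace ℝ (Fin n)} (hρ : 0 ≤ ρ) (hδ : 0 ≤ δ)
    (hφ : 0 ≤ breg φ x' y) (hψ : 0 ≤ breg ψ x' x) (hg : 0 ≤ ⟪g, x' - z⟫)
    (hsub : f z ≥ f x' + ⟪-ν + ν' - ρ • (gradient φ x' - gradient φ y)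
      - δ • (gradient ψ x' - gradient ψ x) - g, z - x'⟫) :
    f x' - f z ≤ ⟪ν' - ν, x' - z⟫ + ρ * (breg φ z y - breg φ z x')
      + δ * (breg ψ z x - breg ψ z x') := by
  have hν : ⟪-ν + ν', z - x'⟫ = -⟪ν' - ν, x' - z⟫ := by
    rw [← inner_neg_right, neg_sub, neg_add_eq_sub]
  have hg' : ⟪g, z - x'⟫ = -⟪g, x' - z⟫ := by rw [← inner_neg_right, neg_sub]
  rw [inner_sub_left, inner_sub_left, inner_sub_left, real_inner_smul_left, real_inner_smul_left,
    breg_three_point, breg_three_point, hν, hg'] at hsub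
  nlinarith [mul_nonneg hρ hφ, mul_nonneg hδ hψ]

theorem breg_add_sum_mul_breg_le {ι : Type*} [Fintype ι] {φ : EuclideanSpace ℝ (Fin n) → ℝ}
    {w : ι → ℝ} (hw : ∑ j, w j = 1) {x : ι → EuclideanSpace ℝ (Fin n)}
    {y z : EuclideanSpace ℝ (Fin n)}
    (h : 0 ≤ ∑ j, w j * ⟪gradient φ y - gradient φ (x j), z - y⟫) :
    breg φ z y + ∑ j, w j * breg φ y (x j) ≤ ∑ j, w j * breg φ z (x j) := by
  simp only [breg_three_point, mul_sub, sum_sub_distrib, ← sum_mul, hw, one_mul] at h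
  linarith

theorem sum_breg_add_sum_sum_mul_breg_le {ι : Type*} [Fintype ι] [DecidableEq ι]
    {P : Matrix ι ι ℝ} (hP : P ∈ doublyStochastic ℝ ι) {φ : EuclideanSpace ℝ (Fin n) → ℝ}
    {x y : ι → EuclideanSpace ℝ (Fin n)} {z : EuclideanSpace ℝ (Fin n)}
    (h : ∀ i, 0 ≤ ∑ j, P i j * ⟪gradient φ (y i) - gradient φ (x j), z - y i⟫) :
    ∑ i, breg φ z (y i) + ∑ i, ∑ j, P i j * breg φ (y i) (x j) ≤ ∑ i, breg φ z (x i) :=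
  calc ∑ i, breg φ z (y i) + ∑ i, ∑ j, P i j * breg φ (y i) (x j)
      = ∑ i, (breg φ z (y i) + ∑ j, P i j * breg φ (y i) (x j)) := sum_add_distrib.symm
    _ ≤ ∑ i, ∑ j, P i j * breg φ z (x j) := by
        gcongr with i
        exact breg_add_sum_mul_breg_le (sum_row_of_mem_doublyStochastic hP i) (h i)
    _ = ∑ i, breg φ z (x i) := sum_sum_smul_of_mem_doublyStochastic hP _

end Bregman

theorem bregman_pdmm_one_step_objective_bound_general {n m : ℕ}
    (𝒳 : Set (EuclideanSpace ℝ (Fin n)))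
    (f : Fin m → EuclideanSpace ℝ (Fin n) → ℝ)
    (P : Matrix (Fin m) (Fin m) ℝ) (hPsym : P.IsSymm)
    (hPnn : ∀ i j, 0 ≤ P i j) (hProw : ∀ i, ∑ j, P i j = 1) (hPpsd : P.PosSemidef)
    (φ : EuclideanSpace ℝ (Fin n) → ℝ)
    (φi : Fin m → EuclideanSpace ℝ (Fin n) → ℝ)
    (hφid : ∀ i, Differentiable ℝ (φi i)) (hφic : ∀ i, ConvexOn ℝ Set.univ (φi i))
    (μ p σ ρ τ γ : ℝ) (δ : Fin m → ℝ)
    (hμ : 0 < μ) (hp : 1 ≤ p)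
    (hstrong : ∀ u ∈ 𝒳, ∀ v ∈ 𝒳, μ / 2 * lpnorm p (u - v) ^ 2 ≤ breg φ u v)
    (hσ : σ = min 1 ((n : ℝ) ^ (2 / p - 1)))
    (hρ : 0 < ρ) (hτ : 0 < τ) (hδ : ∀ i, 0 ≤ δ i)
    (hγ0 : 0 < γ) (hτρ : τ ≤ ρ * (μ * σ - γ))
    (x y ν : ℕ → Fin m → EuclideanSpace ℝ (Fin n))
    (hxX : ∀ t i, x t i ∈ 𝒳) (hyX : ∀ t i, y t i ∈ 𝒳)
    (t : ℕ)
    (hmirror : ∀ s ∈ ({t, t + 1} : Set ℕ), ∀ i, ∀ u ∈ 𝒳,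
      0 ≤ ∑ j, P i j * ⟪gradient φ (y s i) - gradient φ (x s j), u - y s i⟫)
    (hprimal : ∀ i, ∃ g : EuclideanSpace ℝ (Fin n),
      (∀ v ∈ 𝒳, 0 ≤ ⟪g, x (t + 1) i - v⟫) ∧
      ∀ v, f i v ≥ f i (x (t + 1) i) +
        ⟪-ν t i + (∑ j, P i j • ν t j)
            - ρ • (gradient φ (x (t + 1) i) - gradient φ (y t i))
            - δ i • (gradient (φi i) (x (t + 1) i) - gradient (φi i) (x t i))
            - g, v - x (t + 1) i⟫)
    (hdual : ∀ i, ν (t + 1) i =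
      ν t i + τ • (x (t + 1) i - ∑ j, P i j • x (t + 1) j))
    (xstar : EuclideanSpace ℝ (Fin n)) (hxstar : xstar ∈ 𝒳) :
    (∑ i, f i (x (t + 1) i)) - ∑ i, f i xstar ≤
      1 / (2 * τ) * ((∑ i, ‖ν t i‖ ^ 2) - ∑ i, ‖ν (t + 1) i‖ ^ 2)
        + ρ * ∑ i, (breg φ xstar (y t i) - breg φ xstar (y (t + 1) i))
        + ∑ i, δ i * (breg (φi i) xstar (x t i) - breg (φi i) xstar (x (t + 1) i)) := by
  have hds : P ∈ doublyStochastic ℝ (Fin m) := mem_doublyStochastic_iff_sum.2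
    ⟨hPnn, hProw, fun j => by simpa only [hPsym.apply] using hProw j⟩
  have hμσ : 0 < μ * σ := pos_of_mul_pos_right (by nlinarith [mul_pos hρ hγ0]) hρ.le
  have hτμσ : τ ≤ ρ * (μ * σ) := by nlinarith [mul_pos hρ hγ0]
  have hagent i : f i (x (t + 1) i) - f i xstar ≤ ⟪∑ j, P i j • ν t j - ν t i, x (t + 1) i - xstar⟫
      + ρ * (breg φ xstar (y t i) - breg φ xstar (x (t + 1) i))
      + δ i * (breg (φi i) xstar (x t i) - breg (φi i) xstar (x (t + 1) i)) := by
    obtain ⟨g, hg, hsub⟩ := hprimal i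
    exact pdmm_primal_sub_le hρ.le (hδ i)
      (le_trans (by positivity) (hstrong _ (hxX (t + 1) i) _ (hyX t i)))
      (breg_nonneg (hφid i _) (hφic i)) (hg xstar hxstar) (hsub xstar)
  have hdual_sum := sum_inner_sum_smul_sub_eq hds hPsym hτ.ne' hdual xstar
  have hmirror_sum := sum_breg_add_sum_sum_mul_breg_le hds fun i =>
    hmirror (t + 1) (by simp) i xstar hxstar
  have hresidual := mul_sum_norm_sub_sum_smul_sq_le hds hPsym hPpsd (half_pos hμσ).le
    (x (t + 1)) (y (t + 1)) (D := fun i j => breg φ (y (t + 1) i) (x (t + 1) j)) fun i j =>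
      hσ ▸ mul_min_mul_norm_sq_le_of_mul_lpnorm_sq_le hμ.le (by linarith)
        (hstrong _ (hyX _ i) _ (hxX _ j))
  have hR : 0 ≤ ∑ i, ‖x (t + 1) i - ∑ j, P i j • x (t + 1) j‖ ^ 2 := by positivity
  have hsum := sum_le_sum fun i (_ : i ∈ univ) => hagent i
  simp only [sum_sub_distrib, sum_add_distrib, ← mul_sum] at hsum ⊢
  nlinarith [mul_le_mul_of_nonneg_left hresidual hρ.le, mul_le_mul_of_nonneg_right hτμσ hR]

/-- One-step objective descent inequality for Bregman PDMM. -/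
theorem bregman_pdmm_one_step_objective_bound {n m : ℕ}
    (𝒳 : Set (EuclideanSpace ℝ (Fin n)))
    (hXne : 𝒳.Nonempty) (hXclosed : IsClosed 𝒳) (hXconv : Convex ℝ 𝒳)
    (f : Fin m → EuclideanSpace ℝ (Fin n) → ℝ)
    (hf : ∀ i, ConvexOn ℝ Set.univ (f i))
    (P : Matrix (Fin m) (Fin m) ℝ) (hPsym : P.IsSymm)
    (hPnn : ∀ i j, 0 ≤ P i j) (hProw : ∀ i, ∑ j, P i j = 1) (hPpsd : P.PosSemidef)
    (φ : EuclideanSpace ℝ (Fin n) → ℝ)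
    (hφd : Differentiable ℝ φ) (hφc : ConvexOn ℝ Set.univ φ)
    (φi : Fin m → EuclideanSpace ℝ (Fin n) → ℝ)
    (hφid : ∀ i, Differentiable ℝ (φi i)) (hφic : ∀ i, ConvexOn ℝ Set.univ (φi i))
    (μ p σ ρ τ γ : ℝ) (δ : Fin m → ℝ)
    (hμ : 0 < μ) (hp : 1 ≤ p)
    (hstrong : ∀ u ∈ 𝒳, ∀ v ∈ 𝒳, μ / 2 * lpnorm p (u - v) ^ 2 ≤ breg φ u v)
    (hσ : σ = min 1 ((n : ℝ) ^ (2 / p - 1)))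
    (hρ : 0 < ρ) (hτ : 0 < τ) (hδ : ∀ i, 0 ≤ δ i)
    (hγ0 : 0 < γ) (hγ : γ < μ * σ) (hτρ : τ ≤ ρ * (μ * σ - γ))
    (x y ν : ℕ → Fin m → EuclideanSpace ℝ (Fin n))
    (hxX : ∀ t i, x t i ∈ 𝒳) (hyX : ∀ t i, y t i ∈ 𝒳)
    (t : ℕ)
    (hmirror : ∀ s ∈ ({t, t + 1} : Set ℕ), ∀ i, ∀ u ∈ 𝒳,
      0 ≤ ∑ j, P i j * ⟪gradient φ (y s i) - gradient φ (x s j), u - y s i⟫)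
    (hprimal : ∀ i, ∃ g : EuclideanSpace ℝ (Fin n),
      (∀ v ∈ 𝒳, 0 ≤ ⟪g, x (t + 1) i - v⟫) ∧
      ∀ v, f i v ≥ f i (x (t + 1) i) +
        ⟪-ν t i + (∑ j, P i j • ν t j)
            - ρ • (gradient φ (x (t + 1) i) - gradient φ (y t i))
            - δ i • (gradient (φi i) (x (t + 1) i) - gradient (φi i) (x t i))
            - g, v - x (t + 1) i⟫)
    (hdual : ∀ i, ν (t + 1) i =
      ν t i + τ • (x (t + 1) i - ∑ j, P i j • x (t + 1) j))
    (xstar : EuclideanSpace ℝ (Fin n)) (hxstar : xstar ∈ 𝒳) :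
    (∑ i, f i (x (t + 1) i)) - ∑ i, f i xstar ≤
      1 / (2 * τ) * ((∑ i, ‖ν t i‖ ^ 2) - ∑ i, ‖ν (t + 1) i‖ ^ 2)
        + ρ * ∑ i, (breg φ xstar (y t i) - breg φ xstar (y (t + 1) i))
        + ∑ i, δ i * (breg (φi i) xstar (x t i) - breg (φi i) xstar (x (t + 1) i)) :=
  bregman_pdmm_one_step_objective_bound_general 𝒳 f P hPsym hPnn hProw hPpsd φ φi hφid hφic μ p σ ρ
    τ γ δ hμ hp hstrong hσ hρ hτ hδ hγ0 hτρ x y ν hxX hyX t hmirror hprimal hdual xstar hxstar
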